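/- arXiv:2209.04116 — 2 statements merged into one kernel-verified Lean document; each statement's English description precedes it below -/
import Mathlib

section
/- Let n ≥ 1, u, v_1,...,v_n ∈ S_N and w a word in the harmonic algebra H. Then (w,u) * (v_1,...,v_n) = (w,u,v_1,...,v_n) + (w,u+v_1,v_2,...,v_n) + Σ_{i=1}^{n} (-1)^{i-1} Σ_{•_k ∈ {comma,+}, 2≤k≤i} ({w * (v_i •_i ... •_2 v_1)}, u) * (v_{i+1},...,v_n), where (v_i •_i ... •_2 v_1) denotes the word formed from v_i,...,v_1 choosing at each step concatenation (comma) or addition in S_N (+), and the i=1 term is ({w*(v_1)},u)*(v_2,...,v_n). -/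
/- The harmonic (quasi-shuffle) algebra: H = ℚ⟨words over a commutative semigroup M⟩.
We represent the word (u₁,…,u_k) of the paper by a list; `hp` is the quasi-shuffle
recursion on the *last* letters, implemented on reversed lists, and `hpw` is the
paper's harmonic product of two words, `hmul` its ℚ-bilinear extension. -/

/-- Quasi-shuffle recursion, acting on reversed words (head = last letter). -/
noncomputable def hp {M : Type*} [AddCommSemigroup M] : List M → List M → (List M →₀ ℚ)
  | [], w => Finsupp.single w 1
  | u :: w1, [] => Finsupp.single (u :: w1) 1
  | u :: w1, v :: w2 =>
      Finsupp.mapDomain (u :: ·) (hp w1 (v :: w2)) +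
      Finsupp.mapDomain (v :: ·) (hp (u :: w1) w2) +
      Finsupp.mapDomain ((u + v) :: ·) (hp w1 w2)
  termination_by w1 w2 => w1.length + w2.length

/-- The harmonic product of two words (in natural order). -/
noncomputable def hpw {M : Type*} [AddCommSemigroup M] (w1 w2 : List M) : List M →₀ ℚ :=
  Finsupp.mapDomain List.reverse (hp w1.reverse w2.reverse)

/-- The harmonic product on H = ℚ⟨words⟩, the ℚ-bilinear extension of `hpw`. -/
noncomputable def hmul {M : Type*} [AddCommSemigroup M] (x y : List M →₀ ℚ) : List M →₀ ℚ :=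
  x.sum fun w1 c1 => y.sum fun w2 c2 => (c1 * c2) • hpw w1 w2

/-- All decompositions of a word into nonempty consecutive blocks. -/
def decomps {M : Type*} : List M → List (List (List M))
  | [] => [[]]
  | u :: t => (decomps t).flatMap fun d => match d with
      | [] => [[[u]]]
      | b :: rest => [[u] :: b :: rest, (u :: b) :: rest]

/-- The sum (in the semigroup) of the letters of a (nonempty) block. -/
def bsum {M : Type*} [AddCommSemigroup M] [Inhabited M] : List M → M
  | [] => default
  | a :: t => t.foldl (· + ·) a

/-- f(w) = Σ over block decompositions (β₁,…,β_k) of w of Rev(|β₁|,…,|β_k|). -/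
noncomputable def fword {M : Type*} [AddCommSemigroup M] [Inhabited M] (w : List M) :
    List M →₀ ℚ :=
  ((decomps w).map fun d => Finsupp.single ((d.map bsum).reverse) (1 : ℚ)).sum

/-- The antipode on words: S(w) = (-1)^{l(w)} f(w). -/
noncomputable def Sword {M : Type*} [AddCommSemigroup M] [Inhabited M] (w : List M) :
    List M →₀ ℚ :=
  ((-1 : ℚ) ^ w.length) • fword w

/-!
Write `R(x) = ({x}, u)`. Splitting off the last letter `z` of `V = (l, z)`, the quasi-shuffle
recursion gives `(w,u) * V = ((w,u) * l, z) + R(w * V) + (w * l, u + z)`. By associativity the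
alternating sum of the theorem obeys the same recursion, thanks to the antipode identity
`Σ_{i=1}^{n} (-1)^{i-1} f(v_1,…,v_i) * (v_{i+1},…,v_n) = (v_1,…,v_n)`; induction on `n` finishes.

The antipode identity telescopes. Let `D_i` be the part of `f(v_1,…,v_i) * (v_{i+1},…,v_n)` whose
first letter comes from the left factor. The other terms begin with `v_{i+1}`, or with `β + v_{i+1}`
where `β` is the first letter of a word of `f(v_1,…,v_i)`; as the decompositions of
`(v_1,…,v_{i+1})` are those of `(v_1,…,v_i)` with `v_{i+1}` forming a new last block or joining the
last block, these terms make up `D_{i+1}`. So the `i`-th summand is `D_i + D_{i+1}`, while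
`D_n = f(v_1,…,v_n)` and `D_1 = (v_1,…,v_n)`.
-/

open Finsupp

lemma mapDomain_list_sum {α β N : Type*} [AddCommMonoid N] (f : α → β) (l : List (α →₀ N)) :
    mapDomain f l.sum = (l.map (mapDomain f)).sum :=
  map_list_sum (mapDomain.addMonoidHom f) l

section QuasiShuffle

variable {M : Type*} [AddCommSemigroup M]

lemma hp_nil_left (b : List M) : hp [] b = single b 1 := by rw [hp]

lemma hp_nil_right (a : List M) : hp a [] = single a 1 := by
  cases a <;> rw [hp]

lemma hp_cons_cons (x y : M) (a b : List M) :
    hp (x :: a) (y :: b) =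
      mapDomain (x :: ·) (hp a (y :: b)) + mapDomain (y :: ·) (hp (x :: a) b) +
        mapDomain ((x + y) :: ·) (hp a b) := by
  rw [hp]

theorem hp_append_singleton (x y : M) (a b : List M) :
    hp (a ++ [x]) (b ++ [y]) =
      mapDomain (· ++ [x]) (hp a (b ++ [y])) + mapDomain (· ++ [y]) (hp (a ++ [x]) b) +
        mapDomain (· ++ [x + y]) (hp a b) := by
  match a, b with
  | [], [] =>
      simp only [List.nil_append, hp_cons_cons, hp_nil_left, hp_nil_right, mapDomain_single,
        List.singleton_append]
      abel
  | [], z :: b =>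
      have h := hp_append_singleton x y [] b
      simp only [List.nil_append, List.cons_append] at h ⊢
      rw [hp_cons_cons, h, hp_cons_cons x z [] b]
      simp only [hp_nil_left, mapDomain_add, mapDomain_single, ← mapDomain_comp,
        Function.comp_def, List.cons_append]
      abel
  | z :: a, [] =>
      have h := hp_append_singleton x y a []
      simp only [List.nil_append, List.cons_append] at h ⊢
      rw [hp_cons_cons, h, hp_cons_cons z y a []]
      simp only [hp_nil_right, mapDomain_add, mapDomain_single, ← mapDomain_comp,
        Function.comp_def, List.cons_append]
      abel
  | z :: a, t :: b =>
      have h₁ := hp_append_singleton x y a (t :: b)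
      have h₂ := hp_append_singleton x y (z :: a) b
      have h₃ := hp_append_singleton x y a b
      simp only [List.cons_append] at h₁ h₂ h₃ ⊢
      rw [hp_cons_cons, h₁, h₂, h₃, hp_cons_cons z t a (b ++ [y]),
        hp_cons_cons z t (a ++ [x]) b, hp_cons_cons z t a b]
      simp only [mapDomain_add, ← mapDomain_comp, Function.comp_def, List.cons_append]
      abel
termination_by a.length + b.length

lemma hpw_nil_left (b : List M) : hpw [] b = single b 1 := by
  simp [hpw, hp_nil_left]

lemma hpw_nil_right (a : List M) : hpw a [] = single a 1 := by
  simp [hpw, hp_nil_right]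

lemma hpw_cons_cons (x y : M) (a b : List M) :
    hpw (x :: a) (y :: b) =
      mapDomain (x :: ·) (hpw a (y :: b)) + mapDomain (y :: ·) (hpw (x :: a) b) +
        mapDomain ((x + y) :: ·) (hpw a b) := by
  rw [hpw, List.reverse_cons, List.reverse_cons, hp_append_singleton]
  simp only [hpw, mapDomain_add, ← mapDomain_comp, Function.comp_def, List.reverse_append,
    List.reverse_cons, List.reverse_nil, List.nil_append, List.singleton_append]

lemma hpw_append_singleton (x y : M) (a b : List M) :
    hpw (a ++ [x]) (b ++ [y]) =
      mapDomain (· ++ [x]) (hpw a (b ++ [y])) + mapDomain (· ++ [y]) (hpw (a ++ [x]) b) +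
        mapDomain (· ++ [x + y]) (hpw a b) := by
  simp only [hpw, List.reverse_append, List.reverse_singleton, List.singleton_append]
  rw [hp_cons_cons]
  simp only [mapDomain_add, ← mapDomain_comp, Function.comp_def, List.reverse_cons]

end QuasiShuffle

section HarmonicProduct

variable {M : Type*} [AddCommSemigroup M]

lemma hmul_single_single (a b : List M) : hmul (single a 1) (single b 1) = hpw a b := by
  simp [hmul]

lemma hmul_add_left (x x' y : List M →₀ ℚ) : hmul (x + x') y = hmul x y + hmul x' y := by
  unfold hmul
  apply sum_add_index' <;> intros <;> simp [add_mul, add_smul, sum_add]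

lemma hmul_add_right (x y y' : List M →₀ ℚ) : hmul x (y + y') = hmul x y + hmul x y' := by
  unfold hmul
  rw [← sum_add]
  refine sum_congr fun _ _ => ?_
  apply sum_add_index' <;> intros <;> simp [mul_add, add_smul]

lemma hmul_smul_left (c : ℚ) (x y : List M →₀ ℚ) : hmul (c • x) y = c • hmul x y := by
  unfold hmul
  rw [smul_sum, sum_smul_index' (by simp)]
  refine sum_congr fun _ _ => ?_
  rw [smul_sum]
  refine sum_congr fun _ _ => ?_
  rw [smul_smul, smul_eq_mul, mul_assoc]

lemma hmul_smul_right (c : ℚ) (x y : List M →₀ ℚ) : hmul x (c • y) = c • hmul x y := by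
  unfold hmul
  rw [smul_sum]
  refine sum_congr fun _ _ => ?_
  rw [smul_sum, sum_smul_index' (by simp)]
  refine sum_congr fun _ _ => ?_
  rw [smul_smul, smul_eq_mul, mul_left_comm]

noncomputable def hmulBilin : (List M →₀ ℚ) →ₗ[ℚ] (List M →₀ ℚ) →ₗ[ℚ] List M →₀ ℚ :=
  LinearMap.mk₂ ℚ hmul hmul_add_left hmul_smul_left hmul_add_right hmul_smul_right

lemma hmul_zero_left (y : List M →₀ ℚ) : hmul 0 y = 0 := hmulBilin.map_zero₂ y

lemma hmul_zero_right (x : List M →₀ ℚ) : hmul x 0 = 0 := (hmulBilin x).map_zero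

lemma hmul_list_sum_left (l : List (List M →₀ ℚ)) (y : List M →₀ ℚ) :
    hmul l.sum y = (l.map (hmul · y)).sum :=
  map_list_sum (hmulBilin.flip y) l

lemma hmul_list_sum_right (x : List M →₀ ℚ) (l : List (List M →₀ ℚ)) :
    hmul x l.sum = (l.map (hmul x)).sum :=
  map_list_sum (hmulBilin x) l

lemma hmul_finset_sum_right {ι : Type*} (x : List M →₀ ℚ) (s : Finset ι)
    (f : ι → List M →₀ ℚ) : hmul x (∑ i ∈ s, f i) = ∑ i ∈ s, hmul x (f i) :=
  map_sum (hmulBilin x) f s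

lemma hmul_one_left (y : List M →₀ ℚ) : hmul (single [] 1) y = y := by
  induction y using Finsupp.induction_linear with
  | zero => exact hmul_zero_right _
  | add f g hf hg => rw [hmul_add_right, hf, hg]
  | single a r => rw [← smul_single_one a r, hmul_smul_right, hmul_single_single, hpw_nil_left]

lemma hmul_one_right (x : List M →₀ ℚ) : hmul x (single [] 1) = x := by
  induction x using Finsupp.induction_linear with
  | zero => exact hmul_zero_left _
  | add f g hf hg => rw [hmul_add_left, hf, hg]
  | single a r => rw [← smul_single_one a r, hmul_smul_left, hmul_single_single, hpw_nil_right]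

lemma hmul_mapDomain_cons_single (x y : M) (X : List M →₀ ℚ) (b : List M) :
    hmul (mapDomain (x :: ·) X) (single (y :: b) 1) =
      mapDomain (x :: ·) (hmul X (single (y :: b) 1)) +
        mapDomain (y :: ·) (hmul (mapDomain (x :: ·) X) (single b 1)) +
        mapDomain ((x + y) :: ·) (hmul X (single b 1)) := by
  induction X using Finsupp.induction_linear with
  | zero => simp [hmul_zero_left]
  | add f g hf hg =>
      simp only [mapDomain_add, hmul_add_left, hf, hg]
      abel
  | single a r =>
      rw [← smul_single_one a r]
      simp only [mapDomain_smul, hmul_smul_left, mapDomain_single,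
        hmul_single_single, hpw_cons_cons, smul_add]

lemma hmul_single_mapDomain_cons (x y : M) (a : List M) (Y : List M →₀ ℚ) :
    hmul (single (x :: a) 1) (mapDomain (y :: ·) Y) =
      mapDomain (x :: ·) (hmul (single a 1) (mapDomain (y :: ·) Y)) +
        mapDomain (y :: ·) (hmul (single (x :: a) 1) Y) +
        mapDomain ((x + y) :: ·) (hmul (single a 1) Y) := by
  induction Y using Finsupp.induction_linear with
  | zero => simp [hmul_zero_right]
  | add f g hf hg =>
      simp only [mapDomain_add, hmul_add_right, hf, hg]
      abel
  | single b r =>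
      rw [← smul_single_one b r]
      simp only [mapDomain_smul, hmul_smul_right, mapDomain_single,
        hmul_single_single, hpw_cons_cons, smul_add]

lemma hmul_mapDomain_append_singleton (x y : M) (X : List M →₀ ℚ) (b : List M) :
    hmul (mapDomain (· ++ [x]) X) (single (b ++ [y]) 1) =
      mapDomain (· ++ [y]) (hmul (mapDomain (· ++ [x]) X) (single b 1)) +
        mapDomain (· ++ [x]) (hmul X (single (b ++ [y]) 1)) +
        mapDomain (· ++ [x + y]) (hmul X (single b 1)) := by
  induction X using Finsupp.induction_linear with
  | zero => simp [hmul_zero_left]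
  | add f g hf hg =>
      simp only [mapDomain_add, hmul_add_left, hf, hg]
      abel
  | single a r =>
      rw [← smul_single_one a r]
      simp only [mapDomain_smul, hmul_smul_left, mapDomain_single,
        hmul_single_single, hpw_append_singleton, smul_add]
      abel

theorem hpw_assoc (a b c : List M) :
    hmul (hpw a b) (single c 1) = hmul (single a 1) (hpw b c) := by
  match a, b, c with
  | [], b, c => rw [hpw_nil_left, hmul_single_single, hmul_one_left]
  | x :: a, [], c => rw [hpw_nil_right, hpw_nil_left, hmul_single_single]
  | x :: a, y :: b, [] => rw [hpw_nil_right, hmul_one_right, hmul_single_single]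
  | x :: a, y :: b, z :: c =>
      have h₁ := congrArg (mapDomain (x :: ·)) (hpw_assoc a (y :: b) (z :: c))
      have h₂ := congrArg (mapDomain (y :: ·)) (hpw_assoc (x :: a) b (z :: c))
      have h₃ := congrArg (mapDomain ((x + y) :: ·)) (hpw_assoc a b (z :: c))
      have h₄ := congrArg (mapDomain ((x + z) :: ·)) (hpw_assoc a (y :: b) c)
      have h₅ := congrArg (mapDomain ((y + z) :: ·)) (hpw_assoc (x :: a) b c)
      have h₆ := congrArg (mapDomain ((x + (y + z)) :: ·)) (hpw_assoc a b c)
      have hz : mapDomain (z :: ·) (hmul (mapDomain (x :: ·) (hpw a (y :: b))) (single c 1)) +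
            mapDomain (z :: ·) (hmul (mapDomain (y :: ·) (hpw (x :: a) b)) (single c 1)) +
            mapDomain (z :: ·) (hmul (mapDomain ((x + y) :: ·) (hpw a b)) (single c 1)) =
          mapDomain (z :: ·) (hmul (single (x :: a) 1) (hpw (y :: b) c)) := by
        rw [← mapDomain_add, ← mapDomain_add, ← hmul_add_left, ← hmul_add_left,
          ← hpw_cons_cons, hpw_assoc]
      have hx : mapDomain (x :: ·) (hmul (single a 1) (mapDomain (y :: ·) (hpw b (z :: c)))) +
            mapDomain (x :: ·) (hmul (single a 1) (mapDomain (z :: ·) (hpw (y :: b) c))) +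
            mapDomain (x :: ·) (hmul (single a 1) (mapDomain ((y + z) :: ·) (hpw b c))) =
          mapDomain (x :: ·) (hmul (single a 1) (hpw (y :: b) (z :: c))) := by
        rw [← mapDomain_add, ← mapDomain_add, ← hmul_add_right, ← hmul_add_right,
          ← hpw_cons_cons]
      rw [hpw_cons_cons x y, hmul_add_left, hmul_add_left, hmul_mapDomain_cons_single,
        hmul_mapDomain_cons_single, hmul_mapDomain_cons_single, hpw_cons_cons y z,
        hmul_add_right, hmul_add_right, hmul_single_mapDomain_cons, hmul_single_mapDomain_cons,
        hmul_single_mapDomain_cons, add_assoc x y z]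
      linear_combination (norm := abel) h₁ + h₂ + h₃ + hz + h₄ + h₅ + h₆ - hx
termination_by a.length + b.length + c.length

theorem hmul_assoc (x y z : List M →₀ ℚ) : hmul (hmul x y) z = hmul x (hmul y z) := by
  induction x using Finsupp.induction_linear with
  | zero => simp only [hmul_zero_left]
  | add f g hf hg => rw [hmul_add_left, hmul_add_left, hmul_add_left, hf, hg]
  | single a r =>
    rw [← smul_single_one a r]
    simp only [hmul_smul_left]
    congr 1
    induction y using Finsupp.induction_linear with
    | zero => simp only [hmul_zero_left, hmul_zero_right]
    | add f g hf hg => rw [hmul_add_right, hmul_add_left, hmul_add_left, hmul_add_right, hf, hg]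
    | single b s =>
      rw [← smul_single_one b s]
      simp only [hmul_smul_left, hmul_smul_right]
      congr 1
      induction z using Finsupp.induction_linear with
      | zero => simp only [hmul_zero_right]
      | add f g hf hg => rw [hmul_add_right, hmul_add_right, hmul_add_right, hf, hg]
      | single c t =>
        rw [← smul_single_one c t]
        simp only [hmul_smul_right, hmul_single_single, hpw_assoc]

end HarmonicProduct

section Decompositions

variable {α : Type*}

lemma List.modifyHead_modifyLast_comm {f g : α → α} (hfg : ∀ x, f (g x) = g (f x)) :
    ∀ l : List α, (l.modifyLast g).modifyHead f = (l.modifyHead f).modifyLast g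
  | [] => rfl
  | [b] => by
      have h (b' : α) : [b'].modifyLast g = [g b'] := List.modifyLast_concat g b' []
      rw [h, List.modifyHead_cons, List.modifyHead_cons, h, hfg]
  | b :: c :: l => by
      have h (b' : α) : (b' :: c :: l).modifyLast g = b' :: (c :: l).modifyLast g :=
        List.modifyLast_append_of_right_ne_nil g [b'] (c :: l) (List.cons_ne_nil _ _)
      rw [h, List.modifyHead_cons, List.modifyHead_cons, h]

lemma decomps_cons (a : α) (t : List α) :
    decomps (a :: t) = (decomps t).flatMap fun d => match d with
      | [] => [[[a]]]
      | b :: rest => [[a] :: b :: rest, (a :: b) :: rest] := by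
  rw [decomps]

lemma ne_nil_of_mem_decomps {p : List α} (hp : p ≠ []) {d : List (List α)}
    (hd : d ∈ decomps p) : d ≠ [] := by
  obtain ⟨a, t, rfl⟩ := List.exists_cons_of_ne_nil hp
  rw [decomps_cons, List.mem_flatMap] at hd
  obtain ⟨_ | ⟨b, rest⟩, -, hd⟩ := hd <;> aesop

lemma nil_not_mem_of_mem_decomps {p : List α} {d : List (List α)} (hd : d ∈ decomps p) :
    [] ∉ d := by
  induction p generalizing d with
  | nil => simp_all [decomps]
  | cons a t ih =>
      rw [decomps_cons, List.mem_flatMap] at hd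
      obtain ⟨_ | ⟨b, rest⟩, hd', hd⟩ := hd
      · simp_all
      · have := ih hd'
        simp only [List.mem_cons, List.not_mem_nil, or_false] at hd this
        rcases hd with rfl | rfl <;> simp_all

lemma decomps_cons_of_ne_nil (a : α) {t : List α} (ht : t ≠ []) :
    decomps (a :: t) = (decomps t).flatMap fun d => [[a] :: d, d.modifyHead (a :: ·)] := by
  rw [decomps_cons]
  refine List.flatMap_congr fun d hd => ?_
  obtain ⟨b, rest, rfl⟩ := List.exists_cons_of_ne_nil (ne_nil_of_mem_decomps ht hd)
  rfl

theorem decomps_append_singleton_perm (y : α) : ∀ {p : List α}, p ≠ [] →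
    (decomps (p ++ [y])).Perm
      ((decomps p).flatMap fun d => [d ++ [[y]], d.modifyLast (· ++ [y])])
  | [a], _ => by
      have h : [[a]].modifyLast (· ++ [y]) = [[a, y]] := List.modifyLast_concat _ [a] []
      simp [decomps, h]
  | a :: b :: p, _ => by
      have hp : b :: p ≠ [] := List.cons_ne_nil _ _
      rw [List.cons_append, decomps_cons_of_ne_nil a (t := b :: p ++ [y]) (by simp),
        decomps_cons_of_ne_nil a hp, List.flatMap_assoc]
      refine ((decomps_append_singleton_perm y hp).flatMap_right _).trans ?_
      rw [List.flatMap_assoc]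
      refine List.Perm.flatMap_left _ fun d hd => ?_
      obtain ⟨c, d, rfl⟩ := List.exists_cons_of_ne_nil (ne_nil_of_mem_decomps hp hd)
      have hcons : [a] :: (c :: d).modifyLast (· ++ [y]) = ([a] :: c :: d).modifyLast (· ++ [y]) :=
        (List.modifyLast_append_of_right_ne_nil _ [[a]] _ (List.cons_ne_nil _ _)).symm
      have hcomm := List.modifyHead_modifyLast_comm (f := (a :: ·)) (g := (· ++ [y]))
        (fun _ => rfl) (c :: d)
      simp only [List.flatMap_cons, List.flatMap_nil, List.cons_append, List.nil_append,
        List.append_nil, List.modifyHead_cons, hcons, hcomm]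
      exact .cons _ (.swap _ _ _)

end Decompositions

section FwordTerms

variable {M : Type*} [AddCommSemigroup M] [Inhabited M]

def fwordTerms (p : List M) : List (List M) :=
  (decomps p).map fun d => (d.map bsum).reverse

lemma fword_eq_sum_fwordTerms (p : List M) :
    fword p = ((fwordTerms p).map (single · (1 : ℚ))).sum := by
  rw [fword, fwordTerms, List.map_map]
  rfl

lemma fwordTerms_singleton (a : M) : fwordTerms [a] = [[a]] := by
  simp [fwordTerms, decomps, bsum]

lemma ne_nil_of_mem_fwordTerms {p : List M} (hp : p ≠ []) {B : List M}
    (hB : B ∈ fwordTerms p) : B ≠ [] := by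
  obtain ⟨d, hd, rfl⟩ := List.mem_map.1 hB
  simpa using ne_nil_of_mem_decomps hp hd

lemma bsum_singleton (y : M) : bsum [y] = y := rfl

lemma bsum_append_singleton {b : List M} (hb : b ≠ []) (y : M) :
    bsum (b ++ [y]) = bsum b + y := by
  obtain ⟨a, t, rfl⟩ := List.exists_cons_of_ne_nil hb
  simp [bsum, List.foldl_append]

theorem fwordTerms_append_singleton_perm (y : M) {p : List M} (hp : p ≠ []) :
    (fwordTerms (p ++ [y])).Perm
      ((fwordTerms p).flatMap fun B => [y :: B, B.modifyHead (· + y)]) := by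
  refine ((decomps_append_singleton_perm y hp).map _).trans ?_
  rw [fwordTerms, List.map_flatMap, List.flatMap_map]
  refine .of_eq (List.flatMap_congr fun d hd => ?_)
  obtain ⟨d, b, rfl⟩ := List.eq_nil_or_concat' d |>.resolve_left (ne_nil_of_mem_decomps hp hd)
  have hb : b ≠ [] := fun h => nil_not_mem_of_mem_decomps hd (by simp [h])
  simp [List.modifyLast_concat, bsum_append_singleton hb, bsum_singleton]

end FwordTerms

theorem sum_Icc_neg_one_pow_smul_add_succ {R G : Type*} [Ring R] [AddCommGroup G] [Module R G]
    (f : ℕ → G) (n : ℕ) :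
    ∑ i ∈ Finset.Icc 1 n, (-1 : R) ^ (i - 1) • (f i + f (i + 1)) =
      f 1 - (-1 : R) ^ n • f (n + 1) := by
  induction n with
  | zero => simp
  | succ n ih =>
      rw [Finset.sum_Icc_succ_top (by omega), ih, Nat.add_sub_cancel, pow_succ, mul_neg_one,
        neg_smul, smul_add]
      abel

section Antipode

variable {M : Type*} [AddCommSemigroup M]

noncomputable def headMul : List M → List M → List M →₀ ℚ
  | [], _ => 0
  | b :: B, c => mapDomain (b :: ·) (hpw B c)

lemma headMul_nil_right {B : List M} (hB : B ≠ []) : headMul B [] = single B 1 := by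
  obtain ⟨b, B, rfl⟩ := List.exists_cons_of_ne_nil hB
  simp [headMul, hpw_nil_right, mapDomain_single]

lemma hpw_cons_right_eq_headMul {B : List M} (hB : B ≠ []) (y : M) (c : List M) :
    hpw B (y :: c) =
      headMul B (y :: c) + headMul (y :: B) c + headMul (B.modifyHead (· + y)) c := by
  obtain ⟨b, B, rfl⟩ := List.exists_cons_of_ne_nil hB
  exact hpw_cons_cons b y B c

variable [Inhabited M]

noncomputable def headMulSum (p c : List M) : List M →₀ ℚ :=
  ((fwordTerms p).map (headMul · c)).sum

lemma headMulSum_singleton (a : M) (c : List M) : headMulSum [a] c = single (a :: c) 1 := by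
  simp [headMulSum, fwordTerms_singleton, headMul, hpw_nil_left, mapDomain_single]

lemma headMulSum_nil_right {p : List M} (hp : p ≠ []) : headMulSum p [] = fword p := by
  rw [headMulSum, fword_eq_sum_fwordTerms]
  exact congrArg _ <| List.map_congr_left fun B hB =>
    headMul_nil_right (ne_nil_of_mem_fwordTerms hp hB)

theorem hmul_fword_single_cons {p : List M} (hp : p ≠ []) (y : M) (c : List M) :
    hmul (fword p) (single (y :: c) 1) = headMulSum p (y :: c) + headMulSum (p ++ [y]) c := by
  rw [fword_eq_sum_fwordTerms, hmul_list_sum_left, List.map_map, headMulSum, headMulSum,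
    ((fwordTerms_append_singleton_perm y hp).map _).sum_eq, List.map_flatMap, List.flatMap,
    List.sum_flatten, List.map_map, ← List.sum_map_add]
  refine congrArg _ (List.map_congr_left fun B hB => ?_)
  simp only [Function.comp_apply, hmul_single_single,
    hpw_cons_right_eq_headMul (ne_nil_of_mem_fwordTerms hp hB), List.map_cons, List.map_nil,
    List.sum_cons, List.sum_nil, add_zero, add_assoc]

/-- The antipode identity `Σ_{i=0}^{n} S(v_1,…,v_i) * (v_{i+1},…,v_n) = 0` for `n ≥ 1`,
with `S(w) = (-1)^{l(w)} f(w)` and the `i = 0` term moved to the right. -/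
theorem sum_fword_take_mul_drop {V : List M} (hV : V ≠ []) :
    ∑ i ∈ Finset.Icc 1 V.length,
      (-1 : ℚ) ^ (i - 1) • hmul (fword (V.take i)) (single (V.drop i) 1) = single V 1 := by
  obtain ⟨m, hm⟩ : ∃ m, V.length = m + 1 := Nat.exists_eq_succ_of_ne_zero (by simpa using hV)
  have htelescope : ∀ i ∈ Finset.Icc 1 m, hmul (fword (V.take i)) (single (V.drop i) 1) =
      headMulSum (V.take i) (V.drop i) + headMulSum (V.take (i + 1)) (V.drop (i + 1)) := by
    intro i hi
    rw [Finset.mem_Icc] at hi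
    have hi' : i < V.length := by omega
    rw [List.drop_eq_getElem_cons hi', hmul_fword_single_cons, List.take_concat_get' V i hi',
      ← List.drop_eq_getElem_cons hi']
    exact List.ne_nil_of_length_pos (by rw [List.length_take]; omega)
  rw [hm, Finset.sum_Icc_succ_top (by omega),
    Finset.sum_congr rfl fun i hi => by rw [htelescope i hi],
    sum_Icc_neg_one_pow_smul_add_succ, Nat.add_sub_cancel, ← hm, List.take_length,
    List.drop_length, hmul_one_right, headMulSum_nil_right hV]
  obtain ⟨a, t, rfl⟩ := List.exists_cons_of_ne_nil hV
  simp [headMulSum_singleton]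

end Antipode

section Expansion

variable {M : Type*} [AddCommSemigroup M] [Inhabited M]

lemma fword_singleton (a : M) : fword [a] = single [a] 1 := by
  simp [fword_eq_sum_fwordTerms, fwordTerms_singleton]

noncomputable def expansionSum (w : List M) (u : M) (V : List M) : List M →₀ ℚ :=
  ∑ i ∈ Finset.Icc 1 V.length, (-1 : ℚ) ^ (i - 1) •
    hmul (mapDomain (· ++ [u]) (hmul (single w 1) (fword (V.take i)))) (single (V.drop i) 1)

lemma expansionSum_singleton (w : List M) (u z : M) :
    expansionSum w u [z] = mapDomain (· ++ [u]) (hmul (single w 1) (single [z] 1)) := by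
  simp [expansionSum, fword_singleton, hmul_one_right]

theorem expansionSum_append_singleton (w : List M) (u z : M) {l : List M} (hl : l ≠ []) :
    expansionSum w u (l ++ [z]) =
      mapDomain (· ++ [z]) (expansionSum w u l) +
        mapDomain (· ++ [u]) (hmul (single w 1) (single (l ++ [z]) 1)) +
        mapDomain (· ++ [u + z]) (hmul (single w 1) (single l 1)) := by
  have hterm : ∀ i ∈ Finset.Icc 1 l.length,
      hmul (mapDomain (· ++ [u]) (hmul (single w 1) (fword ((l ++ [z]).take i))))
          (single ((l ++ [z]).drop i) 1) =
        mapDomain (· ++ [z])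
            (hmul (mapDomain (· ++ [u]) (hmul (single w 1) (fword (l.take i))))
              (single (l.drop i) 1)) +
          mapDomain (· ++ [u]) (hmul (single w 1)
            (hmul (fword ((l ++ [z]).take i)) (single ((l ++ [z]).drop i) 1))) +
          mapDomain (· ++ [u + z]) (hmul (single w 1)
            (hmul (fword (l.take i)) (single (l.drop i) 1))) := by
    intro i hi
    have hi' : i ≤ l.length := (Finset.mem_Icc.1 hi).2
    rw [List.take_append_of_le_length hi', List.drop_append_of_le_length hi',
      hmul_mapDomain_append_singleton, hmul_assoc, hmul_assoc]
  rw [← sum_fword_take_mul_drop (List.append_ne_nil_of_left_ne_nil hl [z]),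
    ← sum_fword_take_mul_drop hl, expansionSum, expansionSum, List.length_append,
    List.length_singleton, Finset.sum_Icc_succ_top (by omega), Finset.sum_Icc_succ_top (by omega),
    Finset.sum_congr rfl fun i hi => by rw [hterm i hi]]
  have htake : (l ++ [z]).take (l.length + 1) = l ++ [z] := List.take_of_length_le (by simp)
  have hdrop : (l ++ [z]).drop (l.length + 1) = [] := List.drop_of_length_le (by simp)
  simp only [hmul_finset_sum_right, hmul_smul_right, mapDomain_finsetSum, mapDomain_smul,
    smul_add, Finset.sum_add_distrib, Nat.add_sub_cancel, htake, hdrop, hmul_one_right,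
    hmul_add_right, mapDomain_add]
  abel

theorem hmul_single_append_singleton (w : List M) (u : M) {V : List M} (hV : V ≠ []) :
    hmul (single (w ++ [u]) 1) (single V 1) =
      single (w ++ u :: V) 1 + single (w ++ (u + V.headI) :: V.tail) 1 + expansionSum w u V := by
  induction V using List.reverseRecOn with
  | nil => exact absurd rfl hV
  | append_singleton l z ih =>
    have hrec := hmul_mapDomain_append_singleton u z (single w 1) l
    rw [mapDomain_single] at hrec
    rw [hrec]
    rcases eq_or_ne l [] with rfl | hl
    · simp only [List.nil_append, hmul_one_right, mapDomain_single, expansionSum_singleton,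
        List.append_assoc, List.cons_append, List.headI_cons, List.tail_cons]
      abel
    · obtain ⟨a, t, rfl⟩ := List.exists_cons_of_ne_nil hl
      rw [ih hl, expansionSum_append_singleton w u z hl]
      simp only [List.headI_cons, List.tail_cons, mapDomain_add, mapDomain_single,
        List.append_assoc, List.cons_append]
      abel

lemma hmul_mapDomain_hmul_fword (w : List M) (u : M) (p T : List M) :
    hmul (mapDomain (· ++ [u]) (hmul (single w 1) (fword p))) (single T 1) =
      ((decomps p).map fun d => hmul (mapDomain (· ++ [u])
        (hmul (single w 1) (single ((d.map bsum).reverse) 1))) (single T 1)).sum := by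
  rw [fword, hmul_list_sum_right, mapDomain_list_sum, hmul_list_sum_left]
  simp only [List.map_map, Function.comp_def]

end Expansion

/-- for a word w, letters u, v₁,…,v_n,
(w,u)*(v₁,…,v_n) = (w,u,v₁,…,v_n) + (w,u+v₁,v₂,…,v_n)
 + Σ_{i=1}^{n} (-1)^{i-1} Σ_{•} ({w*(v_i •_i ⋯ •_2 v₁)},u) * (v_{i+1},…,v_n),
where the bullet sum runs over block decompositions d of (v₁,…,v_i) and
({x},u) is the linear extension of appending the letter u. -/
theorem harmonic_expansion {M : Type*} [AddCommSemigroup M] [Inhabited M]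
    (n : ℕ) (hn : 1 ≤ n) (u : M) (v : Fin n → M) (w : List M) :
    hmul (Finsupp.single (w ++ [u]) (1 : ℚ)) (Finsupp.single (List.ofFn v) 1) =
      Finsupp.single (w ++ u :: List.ofFn v) 1 +
      Finsupp.single (w ++ (u + v ⟨0, hn⟩) :: (List.ofFn v).drop 1) 1 +
      ∑ i ∈ Finset.Icc 1 n, ((-1 : ℚ) ^ (i - 1)) •
        ((decomps ((List.ofFn v).take i)).map fun d =>
          hmul
            (Finsupp.mapDomain (fun l => l ++ [u])
              (hmul (Finsupp.single w (1 : ℚ))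
                (Finsupp.single ((d.map bsum).reverse) 1)))
            (Finsupp.single ((List.ofFn v).drop i) 1)).sum := by
  obtain ⟨m, rfl⟩ := Nat.exists_eq_add_of_le' hn
  rw [hmul_single_append_singleton w u (by simp), expansionSum, List.length_ofFn, List.ofFn_succ]
  simp only [List.headI_cons, List.tail_cons, List.drop_one, hmul_mapDomain_hmul_fword]
  rfl
end

section
/- Let n_1, n_2 ≤ 0 be integers with n_1 n_2 ≠ 0 such that n_1+n_2 is a negative odd integer (so (n_1,n_2) is a regular point of ζ_2). Then ζ_2(n_1, n_2) = -(1/2) ζ(n_1+n_2) = B_{-n_1-n_2+1} / (2(-n_1-n_2+1)). -/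
open Complex

/-- The Euler–Zagier multiple zeta series Σ_{0<n₁<⋯<n_r} n₁^{-s₁}⋯n_r^{-s_r},
for a list s = [s₁,…,s_r] of complex exponents. -/
noncomputable def mzSeries (s : List ℂ) : ℂ :=
  ∑' n : Fin s.length → ℕ,
    if (∀ i, 0 < n i) ∧ (∀ i j : Fin s.length, i < j → n i < n j) then
      ∏ i, (n i : ℂ) ^ (-(s.get i)) else 0

/-- The sum of the last k entries of s. -/
noncomputable def lastSum (s : List ℂ) (k : ℕ) : ℂ := (s.drop (s.length - k)).sum

/-- The domain of absolute convergence: Re(s_{r-k+1}+⋯+s_r) > k for k = 1,…,r. -/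
def convDom (s : List ℂ) : Prop :=
  ∀ k, 1 ≤ k → k ≤ s.length → (k : ℝ) < (lastSum s k).re

/-- (s₁,…,s_r) is a regular (non-singular) point of ζ_r: s_r ≠ 1,
s_{r-1}+s_r ∉ {2,1,0,-2,-4,…}, and s_{r-k+1}+⋯+s_r ∉ ℤ_{≤k} for k = 3,…,r. -/
def MZRegular (s : List ℂ) : Prop :=
  (1 ≤ s.length → lastSum s 1 ≠ 1) ∧
  (2 ≤ s.length → ¬(lastSum s 2 = 2 ∨ lastSum s 2 = 1 ∨ lastSum s 2 = 0 ∨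
      ∃ m : ℕ, lastSum s 2 = -(2 * ((m : ℂ) + 1)))) ∧
  (∀ k, 3 ≤ k → k ≤ s.length → ¬∃ m : ℤ, (m : ℂ) = lastSum s k ∧ m ≤ (k : ℤ))

/-- `Z` is the meromorphic continuation of the family of Euler–Zagier multiple
zeta-functions of all depths: it agrees with the series on the domain of absolute
convergence and is analytic at every regular point. -/
structure IsMZFFamily (Z : List ℂ → ℂ) : Prop where
  series_eq : ∀ s : List ℂ, convDom s → Z s = mzSeries s
  analytic : ∀ r : ℕ, AnalyticOnNhd ℂ (fun v : Fin r → ℂ => Z (List.ofFn v))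
    {v : Fin r → ℂ | MZRegular (List.ofFn v)}

/-- ζ(-k) = -B_{k+1}/(k+1); `Bdiv k` is B_{k+1}/(k+1) as a complex number. -/
noncomputable def Bdiv (k : ℕ) : ℂ := ((bernoulli (k + 1) : ℚ) : ℂ) / ((k : ℂ) + 1)

/-- Riemann zeta at an integer argument. -/
noncomputable def zetaInt (m : ℤ) : ℂ := riemannZeta ((m : ℤ) : ℂ)

/-!
For `a ≥ 1` and `Re s > a + 2`, summing over the smaller index first and applying Faulhaber's
formula `∑_{0<m<n} m^a = ∑_{i ≤ a} B_i C(a+1,i)/(a+1) n^{a+1-i}` gives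
`ζ₂(-a, s) = ∑_{i ≤ a} B_i C(a+1,i)/(a+1) ζ(s - (a+1-i))`. Both sides are analytic off a
countable set of integers, whose complement in `ℂ` is connected, so the identity persists down to
`s = -b`.
When `a + b` is odd, every term with `i` even then sits at a trivial zero of `ζ`, `B_i = 0` for
odd `i > 1`, and only the term `i = 1`, namely `-(1/2) ζ(-a-b)`, survives.
-/

open Finset

lemma mzSeries_pair (c₁ c₂ : ℂ) :
    mzSeries [c₁, c₂] =
      ∑' p : ℕ × ℕ,
        if p.2 < p.1 ∧ 0 < p.2 then (p.2 : ℂ) ^ (-c₁) * (p.1 : ℂ) ^ (-c₂) else 0 := by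
  let e : ℕ × ℕ ≃ (Fin 2 → ℕ) :=
    (Equiv.prodComm ℕ ℕ).trans (piFinTwoEquiv fun _ => ℕ).symm
  show (∑' n : Fin 2 → ℕ, if (∀ i, 0 < n i) ∧ (∀ i j : Fin 2, i < j → n i < n j) then
      ∏ i, (n i : ℂ) ^ (-([c₁, c₂] : List ℂ).get i) else 0) = _
  rw [← e.tsum_eq]
  congr 1 with p
  have he : e p = ![p.2, p.1] := rfl
  rw [he]
  by_cases h : p.2 < p.1 ∧ 0 < p.2
  · rw [if_pos, if_pos h, Fin.prod_univ_two]
    · rfl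
    refine ⟨fun i => ?_, fun i j hij => ?_⟩
    · fin_cases i <;> simp <;> omega
    · fin_cases i <;> fin_cases j <;> simp_all
  · rw [if_neg, if_neg h]
    rintro ⟨hpos, hlt⟩
    exact h ⟨hlt 0 1 Fin.zero_lt_one, hpos 0⟩

lemma lastSum_pair_one (c₁ c₂ : ℂ) : lastSum [c₁, c₂] 1 = c₂ := by simp [lastSum]

lemma lastSum_pair_two (c₁ c₂ : ℂ) : lastSum [c₁, c₂] 2 = c₁ + c₂ := by simp [lastSum]

lemma convDom_pair {c₁ c₂ : ℂ} (h₁ : 1 < c₂.re) (h₂ : 2 < (c₁ + c₂).re) :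
    convDom [c₁, c₂] := by
  intro k hk1 hk2
  simp only [List.length_cons, List.length_nil] at hk2
  interval_cases k
  · rw [lastSum_pair_one]; exact_mod_cast h₁
  · rw [lastSum_pair_two]; exact_mod_cast h₂

lemma mzRegular_pair {c₁ c₂ : ℂ} (h₁ : c₂ ≠ 1)
    (h₂ : ¬(c₁ + c₂ = 2 ∨ c₁ + c₂ = 1 ∨ c₁ + c₂ = 0 ∨
      ∃ m : ℕ, c₁ + c₂ = -(2 * ((m : ℂ) + 1)))) :
    MZRegular [c₁, c₂] := by
  refine ⟨fun _ => by rwa [lastSum_pair_one], fun _ => by rwa [lastSum_pair_two], ?_⟩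
  intro k hk3 hk2
  simp only [List.length_cons, List.length_nil] at hk2
  omega

lemma IsMZFFamily.analyticOnNhd_pair {Z : List ℂ → ℂ} (hZ : IsMZFFamily Z) (c : ℂ) :
    AnalyticOnNhd ℂ (fun s => Z [c, s]) {s | MZRegular [c, s]} := by
  have hpair : AnalyticOnNhd ℂ (fun s : ℂ => ![c, s]) {s | MZRegular [c, s]} := fun s _ =>
    AnalyticAt.pi fun i => by fin_cases i; exacts [analyticAt_const, analyticAt_id]
  have hZ2 := (hZ.analytic 2).comp hpair fun s hs => by simpa [List.ofFn_succ] using hs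
  simpa [Function.comp_def, List.ofFn_succ] using hZ2

noncomputable def faulhaberCoeff (p i : ℕ) : ℂ := bernoulli i * (p + 1).choose i / (p + 1)

theorem sum_range_pow_eq_faulhaber (n p : ℕ) :
    ∑ k ∈ range n, (k : ℂ) ^ p =
      ∑ i ∈ range (p + 1), faulhaberCoeff p i * (n : ℂ) ^ (p + 1 - i) := by
  have h := congrArg (Rat.cast (K := ℂ)) (sum_range_pow n p)
  push_cast at h
  rw [h]
  refine sum_congr rfl fun i _ => ?_
  rw [faulhaberCoeff]
  ring

lemma faulhaberCoeff_one (p : ℕ) : faulhaberCoeff p 1 = -(1 / 2) := by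
  have : (p + 1 : ℂ) ≠ 0 := by exact_mod_cast p.succ_ne_zero
  rw [faulhaberCoeff, bernoulli_one, Nat.choose_one_right]
  push_cast
  field_simp

lemma faulhaberCoeff_eq_zero_of_odd {p i : ℕ} (hi : Odd i) (h1 : 1 < i) :
    faulhaberCoeff p i = 0 := by
  simp [faulhaberCoeff, bernoulli_eq_zero_of_odd hi h1]

noncomputable def zetaFaulhaber (a : ℕ) (s : ℂ) : ℂ :=
  ∑ i ∈ range (a + 1), faulhaberCoeff a i * riemannZeta (s - (a + 1 - i : ℕ))

lemma sum_range_pow_mul_rpow_le (a n : ℕ) (σ : ℝ) :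
    ∑ m ∈ range n, (m : ℝ) ^ a * (n : ℝ) ^ (-σ) ≤ (n : ℝ) ^ ((a : ℝ) + 1 - σ) := by
  rcases n.eq_zero_or_pos with rfl | hn
  · simp only [range_zero, sum_empty]
    positivity
  have hn' : (0 : ℝ) < n := by exact_mod_cast hn
  calc ∑ m ∈ range n, (m : ℝ) ^ a * (n : ℝ) ^ (-σ)
      ≤ ∑ _m ∈ range n, (n : ℝ) ^ a * (n : ℝ) ^ (-σ) := by
        gcongr with m hm
        exact_mod_cast (mem_range.mp hm).le
    _ = (n : ℝ) ^ ((a : ℝ) + 1 - σ) := by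
        rw [sum_const, card_range, nsmul_eq_mul, sub_eq_add_neg, Real.rpow_add hn',
          Real.rpow_add_one hn'.ne', Real.rpow_natCast]
        ring

lemma summable_pow_mul_rpow_neg {a : ℕ} {σ : ℝ} (hσ : a + 2 < σ) :
    Summable fun p : ℕ × ℕ =>
      if p.2 < p.1 ∧ 0 < p.2 then (p.2 : ℝ) ^ a * (p.1 : ℝ) ^ (-σ) else 0 := by
  set f := fun p : ℕ × ℕ =>
    if p.2 < p.1 ∧ 0 < p.2 then (p.2 : ℝ) ^ a * (p.1 : ℝ) ^ (-σ) else 0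
  have hf : 0 ≤ f := fun p => by
    simp only [f, Pi.zero_apply]
    split_ifs <;> positivity
  have hsupp : ∀ n, ∀ m ∉ range n, f (n, m) = 0 := fun n m hm =>
    if_neg fun h => hm (mem_range.mpr h.1)
  have hinner : ∀ n : ℕ, ∑' m, f (n, m) ≤ (n : ℝ) ^ ((a : ℝ) + 1 - σ) := by
    intro n
    rw [tsum_eq_sum (hsupp n)]
    refine (sum_le_sum fun m _ => ?_).trans (sum_range_pow_mul_rpow_le a n σ)
    simp only [f]
    split_ifs
    exacts [le_rfl, by positivity]
  refine (summable_prod_of_nonneg hf).mpr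
    ⟨fun n => summable_of_ne_finset_zero (hsupp n), ?_⟩
  exact (Real.summable_nat_rpow.mpr (by linarith)).of_nonneg_of_le
    (fun n => tsum_nonneg fun m => hf (n, m)) hinner

lemma summable_pow_mul_cpow_neg {a : ℕ} {s : ℂ} (hs : a + 2 < s.re) :
    Summable fun p : ℕ × ℕ =>
      if p.2 < p.1 ∧ 0 < p.2 then (p.2 : ℂ) ^ a * (p.1 : ℂ) ^ (-s) else 0 := by
  refine (summable_pow_mul_rpow_neg hs).of_norm_bounded fun p => ?_
  split_ifs with h
  · rw [norm_mul, norm_pow, Complex.norm_natCast,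
      Complex.norm_natCast_cpow_of_pos (h.2.trans h.1), Complex.neg_re]
  · simp

lemma tsum_pow_mul_cpow_neg {a : ℕ} (ha : a ≠ 0) (s : ℂ) (n : ℕ) :
    ∑' m, (if m < n ∧ 0 < m then (m : ℂ) ^ a * (n : ℂ) ^ (-s) else 0) =
      (∑ m ∈ range n, (m : ℂ) ^ a) * (n : ℂ) ^ (-s) := by
  rw [tsum_eq_sum fun m hm => if_neg fun h => hm (mem_range.mpr h.1), sum_mul]
  refine sum_congr rfl fun m hm => ?_
  rcases m.eq_zero_or_pos with rfl | hm0
  · simp [ha]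
  · rw [if_pos ⟨mem_range.mp hm, hm0⟩]

lemma natCast_pow_mul_cpow_neg (n : ℕ) {k : ℕ} (hk : k ≠ 0) {s : ℂ} (hs : s ≠ k) :
    (n : ℂ) ^ k * (n : ℂ) ^ (-s) = 1 / (n : ℂ) ^ (s - k) := by
  rcases eq_or_ne (n : ℂ) 0 with hn | hn
  · rw [hn, zero_pow hk, zero_mul, Complex.zero_cpow (sub_ne_zero.mpr hs), div_zero]
  · rw [← Complex.cpow_natCast, ← Complex.cpow_add _ _ hn, one_div, ← Complex.cpow_neg]
    ring_nf

theorem mzSeries_neg_nat_left {a : ℕ} (ha : a ≠ 0) {s : ℂ} (hs : a + 2 < s.re) :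
    mzSeries [-(a : ℂ), s] = zetaFaulhaber a s := by
  have hre : ∀ i ∈ range (a + 1), 1 < (s - (a + 1 - i : ℕ)).re := by
    intro i _
    have : ((a + 1 - i : ℕ) : ℝ) ≤ a + 1 := by exact_mod_cast Nat.sub_le (a + 1) i
    rw [Complex.sub_re, Complex.natCast_re]
    linarith
  have hpow : ∀ i ∈ range (a + 1), ∀ n : ℕ,
      (n : ℂ) ^ (a + 1 - i) * (n : ℂ) ^ (-s) = 1 / (n : ℂ) ^ (s - (a + 1 - i : ℕ)) := by
    intro i hi n
    refine natCast_pow_mul_cpow_neg n (by have := mem_range.mp hi; omega) fun h => ?_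
    have := hre i hi
    rw [h, sub_self, Complex.zero_re] at this
    norm_num at this
  have hsum := summable_pow_mul_cpow_neg hs
  rw [mzSeries_pair]
  simp only [neg_neg, Complex.cpow_natCast]
  rw [hsum.tsum_prod' hsum.prod_factor]
  simp only [tsum_pow_mul_cpow_neg ha, sum_range_pow_eq_faulhaber, sum_mul, mul_assoc]
  calc ∑' n : ℕ, ∑ i ∈ range (a + 1),
          faulhaberCoeff a i * ((n : ℂ) ^ (a + 1 - i) * (n : ℂ) ^ (-s))
      = ∑' n : ℕ, ∑ i ∈ range (a + 1),
          faulhaberCoeff a i * (1 / (n : ℂ) ^ (s - (a + 1 - i : ℕ))) := by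
        congr 1 with n
        exact sum_congr rfl fun i hi => by rw [hpow i hi n]
    _ = zetaFaulhaber a s := by
        rw [Summable.tsum_finsetSum fun i hi =>
          (Complex.summable_one_div_nat_cpow.mpr (hre i hi)).mul_left _]
        exact sum_congr rfl fun i hi => by
          rw [tsum_mul_left, zeta_eq_tsum_one_div_nat_cpow (hre i hi)]

/-- A countable set of integers containing the poles of `zetaFaulhaber a` and the singular points
of `s ↦ ζ₂(-a, s)`. -/
def faulhaberExceptional (a : ℕ) : Set ℂ :=
  (Int.cast : ℤ → ℂ) '' {m | Even ((a : ℤ) - m) ∨ (1 ≤ m ∧ m ≤ a + 2)}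

lemma isPreconnected_compl_faulhaberExceptional (a : ℕ) :
    IsPreconnected (faulhaberExceptional a)ᶜ :=
  (((Set.to_countable _).image _).isConnected_compl_of_one_lt_rank
    (by rw [Complex.rank_real_complex]; norm_num)).isPreconnected

lemma intCast_notMem_faulhaberExceptional {a : ℕ} {m : ℤ}
    (h : ¬Even ((a : ℤ) - m) ∧ (m < 1 ∨ a + 2 < m)) :
    (m : ℂ) ∉ faulhaberExceptional a := by
  rintro ⟨k, hk, hkm⟩
  obtain rfl : k = m := by exact_mod_cast hkm
  rcases hk with hk | hk
  · exact h.1 hk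
  · omega

lemma mzRegular_of_notMem_faulhaberExceptional {a : ℕ} {s : ℂ}
    (hs : s ∉ faulhaberExceptional a) : MZRegular [-(a : ℂ), s] := by
  have hint : ∀ m : ℤ, s = m → ¬(Even ((a : ℤ) - m) ∨ (1 ≤ m ∧ m ≤ a + 2)) :=
    fun m hm h => hs ⟨m, h, hm.symm⟩
  refine mzRegular_pair (fun h => hint 1 (by simpa using h) (Or.inr ⟨le_rfl, by omega⟩)) ?_
  rintro (h | h | h | ⟨k, h⟩)
  · exact hint (a + 2) (by push_cast; linear_combination h) (Or.inr ⟨by omega, le_rfl⟩)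
  · exact hint (a + 1) (by push_cast; linear_combination h) (Or.inr ⟨by omega, by omega⟩)
  · exact hint a (by push_cast; linear_combination h) (Or.inl (by simp))
  · exact hint (a - 2 * (k + 1)) (by push_cast; linear_combination h)
      (Or.inl ⟨k + 1, by ring⟩)

lemma neg_natCast_notMem_faulhaberExceptional {a b : ℕ} (hab : Odd (a + b)) :
    -(b : ℂ) ∉ faulhaberExceptional a := by
  have h : ¬Even ((a : ℤ) - -(b : ℤ)) ∧ (-(b : ℤ) < 1 ∨ a + 2 < -(b : ℤ)) := by
    refine ⟨?_, Or.inl (by omega)⟩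
    rw [Int.not_even_iff_odd, sub_neg_eq_add]
    exact_mod_cast hab
  simpa using intCast_notMem_faulhaberExceptional h

lemma analyticOnNhd_zetaFaulhaber (a : ℕ) :
    AnalyticOnNhd ℂ (zetaFaulhaber a) (faulhaberExceptional a)ᶜ := by
  intro s hs
  refine Finset.analyticAt_fun_sum _ fun i hi => analyticAt_const.mul ?_
  have hia : i ≤ a := Nat.lt_succ_iff.mp (mem_range.mp hi)
  have hne : s - (a + 1 - i : ℕ) ≠ 1 := fun h =>
    hs ⟨a + 2 - i, Or.inr ⟨by omega, by omega⟩, by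
      rw [Nat.cast_sub (by omega)] at h
      push_cast at h ⊢
      linear_combination -h⟩
  exact (analyticOn_riemannZeta _ hne).comp (f := fun z => z - _) (by fun_prop)

theorem IsMZFFamily.eq_zetaFaulhaber {Z : List ℂ → ℂ} (hZ : IsMZFFamily Z) {a : ℕ}
    (ha : a ≠ 0) {s : ℂ} (hs : s ∉ faulhaberExceptional a) :
    Z [-(a : ℂ), s] = zetaFaulhaber a s := by
  have hZa : AnalyticOnNhd ℂ (fun s => Z [-(a : ℂ), s]) (faulhaberExceptional a)ᶜ :=
    (hZ.analyticOnNhd_pair _).mono fun s hs => mzRegular_of_notMem_faulhaberExceptional hs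
  have hs₀ : (((a + 3 : ℕ) : ℤ) : ℂ) ∉ faulhaberExceptional a :=
    intCast_notMem_faulhaberExceptional
      ⟨by rw [Int.not_even_iff_odd]; exact ⟨-2, by push_cast; ring⟩, by omega⟩
  have hnear :
      (fun s => Z [-(a : ℂ), s]) =ᶠ[nhds (((a + 3 : ℕ) : ℤ) : ℂ)] zetaFaulhaber a := by
    have hhalf : {s : ℂ | a + 2 < s.re} ∈ nhds (((a + 3 : ℕ) : ℤ) : ℂ) :=
      (isOpen_lt continuous_const Complex.continuous_re).mem_nhds (by push_cast; norm_num)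
    filter_upwards [hhalf] with s hs
    have hconv : convDom [-(a : ℂ), s] := convDom_pair (by linarith)
      (by rw [Complex.add_re, Complex.neg_re, Complex.natCast_re]; linarith)
    rw [hZ.series_eq _ hconv, mzSeries_neg_nat_left ha hs]
  exact hZa.eqOn_of_preconnected_of_eventuallyEq (analyticOnNhd_zetaFaulhaber a)
    (isPreconnected_compl_faulhaberExceptional a) hs₀ hnear hs

theorem zetaFaulhaber_neg_nat {a b : ℕ} (ha : a ≠ 0) (hab : Odd (a + b)) :
    zetaFaulhaber a (-b) = -(1 / 2) * riemannZeta (-(a + b : ℕ)) := by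
  rw [zetaFaulhaber, sum_eq_single 1]
  · rw [faulhaberCoeff_one, Nat.add_sub_cancel]
    push_cast
    ring_nf
  · intro i hi hi1
    have hia : i ≤ a := Nat.lt_succ_iff.mp (mem_range.mp hi)
    rcases i.even_or_odd with hi_even | hi_odd
    · obtain ⟨k, hk⟩ : ∃ k : ℕ, b + (a + 1 - i) = 2 * (k + 1) := by
        obtain ⟨r, hr⟩ := hi_even
        obtain ⟨u, hu⟩ := hab
        exact ⟨u - r, by omega⟩
      have hk' : ((b + (a + 1 - i) : ℕ) : ℂ) = ((2 * (k + 1) : ℕ) : ℂ) := congrArg _ hk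
      push_cast at hk'
      have harg : -(b : ℂ) - ((a + 1 - i : ℕ) : ℂ) = -2 * ((k : ℂ) + 1) := by
        linear_combination -hk'
      rw [harg, riemannZeta_neg_two_mul_nat_add_one, mul_zero]
    · have h1i : 1 < i := by obtain ⟨r, rfl⟩ := hi_odd; omega
      rw [faulhaberCoeff_eq_zero_of_odd hi_odd h1i, zero_mul]
  · exact fun h => absurd (mem_range.mpr (by omega)) h

lemma neg_half_mul_riemannZeta_neg_nat_of_odd {q : ℕ} (hq : Odd q) :
    -(1 / 2) * riemannZeta (-q) = ((bernoulli (q + 1) : ℚ) : ℂ) / (2 * ((q : ℂ) + 1)) := by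
  have : (q + 1 : ℂ) ≠ 0 := by exact_mod_cast q.succ_ne_zero
  rw [riemannZeta_neg_nat_eq_bernoulli, hq.neg_one_pow]
  field_simp

/-- for integers n₁, n₂ ≤ 0 with n₁n₂ ≠ 0 and n₁+n₂ a negative odd
integer (so (n₁,n₂) is a regular point of ζ₂),
ζ₂(n₁,n₂) = -(1/2) ζ(n₁+n₂) = B_{-n₁-n₂+1}/(2(-n₁-n₂+1)). -/
theorem zeta2_nonpos_nonpos (Z : List ℂ → ℂ) (hZ : IsMZFFamily Z)
    (n₁ n₂ : ℤ) (h1 : n₁ ≤ 0) (h2 : n₂ ≤ 0) (h0 : n₁ * n₂ ≠ 0)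
    (hreg : n₁ + n₂ < 0 ∧ Odd (n₁ + n₂)) :
    Z [(n₁ : ℂ), (n₂ : ℂ)] = -(1 / 2) * zetaInt (n₁ + n₂) ∧
    -(1 / 2 : ℂ) * zetaInt (n₁ + n₂) =
      ((bernoulli ((-n₁ - n₂ + 1).toNat) : ℚ) : ℂ) / (2 * ((-n₁ - n₂ + 1 : ℤ) : ℂ)) := by
  obtain ⟨a, rfl⟩ := Int.exists_eq_neg_ofNat h1
  obtain ⟨b, rfl⟩ := Int.exists_eq_neg_ofNat h2
  have ha : a ≠ 0 := by rintro rfl; simp at h0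
  have hab : Odd (a + b) := by
    have := hreg.2.neg
    rw [neg_add, neg_neg, neg_neg] at this
    exact_mod_cast this
  have hsum : ((-(a : ℤ) + -(b : ℤ) : ℤ) : ℂ) = -((a + b : ℕ) : ℂ) := by push_cast; ring
  have hnat : -(-(a : ℤ)) - -(b : ℤ) + 1 = ((a + b + 1 : ℕ) : ℤ) := by push_cast; ring
  rw [zetaInt, hsum, hnat, Int.toNat_natCast, neg_half_mul_riemannZeta_neg_nat_of_odd hab]
  refine ⟨?_, by push_cast; ring⟩
  rw [Int.cast_neg, Int.cast_neg, Int.cast_natCast, Int.cast_natCast,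
    hZ.eq_zetaFaulhaber ha (neg_natCast_notMem_faulhaberExceptional hab),
    zetaFaulhaber_neg_nat ha hab, neg_half_mul_riemannZeta_neg_nat_of_odd hab]
end
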